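/- arXiv:1605.00453 — 4 statements merged into one kernel-verified Lean document; each statement's English description precedes it below -/
import Mathlib

section
/- The derivative of the flow is a fundamental solution of the variational equation: X(t) := ∂_u E_F(t,u)·v satisfies ∂_t X(t) = F'(E_F(t,u))·X(t) with X(0) = v. -/
/-- The derivative of the flow solves the variational equation:
`X(t) := ∂_u E_F(t,u)·v` satisfies `∂_t X(t) = F'(E_F(t,u))·X(t)` with `X(0) = v`. -/
theorem flow_derivative_variational_equation {n : ℕ}
    (F : (Fin n → ℝ) → (Fin n → ℝ)) (hF : ContDiff ℝ (⊤ : ℕ∞) F)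
    (E : ℝ → (Fin n → ℝ) → (Fin n → ℝ))
    (hE : ContDiff ℝ (⊤ : ℕ∞) (fun p : ℝ × (Fin n → ℝ) => E p.1 p.2))
    (hflow : ∀ t u, HasDerivAt (fun s => E s u) (F (E t u)) t)
    (hinit : ∀ u, E 0 u = u)
    (u v : Fin n → ℝ) :
    (∀ t : ℝ, HasDerivAt (fun s => fderiv ℝ (E s) u v)
        (fderiv ℝ F (E t u) (fderiv ℝ (E t) u v)) t)
    ∧ fderiv ℝ (E 0) u v = v := by
  set G : ℝ × (Fin n → ℝ) → (Fin n → ℝ) := fun p => E p.1 p.2 with hGdef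
  have hGd : Differentiable ℝ G := hE.differentiable (by simp)
  have hD : ContDiff ℝ (⊤ : ℕ∞) (fderiv ℝ G) := hE.fderiv_right (by simp)
  -- the u-partial derivative of E equals fderiv of G in direction (0, v)
  have hA : ∀ s w, HasFDerivAt (E s)
      ((fderiv ℝ G (s, w)).comp (ContinuousLinearMap.inr ℝ ℝ (Fin n → ℝ))) w := by
    intro s w
    exact ((hGd (s, w)).hasFDerivAt).comp w (hasFDerivAt_prodMk_right s w)
  have hA' : ∀ s w, fderiv ℝ (E s) w v = fderiv ℝ G (s, w) ((0 : ℝ), v) := by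
    intro s w
    rw [(hA s w).fderiv]; rfl
  -- the t-partial derivative of G is F ∘ G
  have hB : ∀ p : ℝ × (Fin n → ℝ), fderiv ℝ G p ((1 : ℝ), (0 : Fin n → ℝ)) = F (G p) := by
    intro p
    have h1 : HasDerivAt (fun t : ℝ => (t, p.2)) ((1 : ℝ), (0 : Fin n → ℝ)) p.1 :=
      (hasDerivAt_id p.1).prodMk (hasDerivAt_const p.1 p.2)
    have h2 : HasDerivAt (fun t : ℝ => G (t, p.2))
        (fderiv ℝ G p ((1 : ℝ), (0 : Fin n → ℝ))) p.1 := by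
      simpa [Function.comp_def] using ((hGd p).hasFDerivAt.comp_hasDerivAt p.1 h1)
    exact h2.unique (hflow p.1 p.2)
  constructor
  · intro t
    set x : ℝ × (Fin n → ℝ) := (t, u) with hx
    have hsymm : IsSymmSndFDerivAt ℝ G x :=
      hE.contDiffAt.isSymmSndFDerivAt
        (by rw [minSmoothness_of_isRCLikeNormedField]; exact WithTop.coe_le_coe.mpr (le_top : (2 : ℕ∞) ≤ ⊤))
    have hcurve : HasDerivAt (fun s : ℝ => (s, u)) ((1 : ℝ), (0 : Fin n → ℝ)) t :=
      (hasDerivAt_id t).prodMk (hasDerivAt_const t u)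
    have happ : HasFDerivAt (fun p => fderiv ℝ G p ((0 : ℝ), v))
        ((ContinuousLinearMap.apply ℝ (Fin n → ℝ) ((0 : ℝ), v)).comp
          (fderiv ℝ (fderiv ℝ G) x)) x :=
      (ContinuousLinearMap.apply ℝ (Fin n → ℝ) ((0 : ℝ), v)).hasFDerivAt.comp x
        ((hD.differentiable (by simp) x).hasFDerivAt)
    have hX : HasDerivAt (fun s => fderiv ℝ G (s, u) ((0 : ℝ), v))
        (fderiv ℝ (fderiv ℝ G) x ((1 : ℝ), (0 : Fin n → ℝ)) ((0 : ℝ), v)) t := by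
      simpa [Function.comp_def] using happ.comp_hasDerivAt t hcurve
    have happ2 : HasFDerivAt (fun p => fderiv ℝ G p ((1 : ℝ), (0 : Fin n → ℝ)))
        ((ContinuousLinearMap.apply ℝ (Fin n → ℝ) ((1 : ℝ), (0 : Fin n → ℝ))).comp
          (fderiv ℝ (fderiv ℝ G) x)) x :=
      (ContinuousLinearMap.apply ℝ (Fin n → ℝ)
          ((1 : ℝ), (0 : Fin n → ℝ))).hasFDerivAt.comp x
        ((hD.differentiable (by simp) x).hasFDerivAt)
    have hFG : HasFDerivAt (F ∘ G) ((fderiv ℝ F (G x)).comp (fderiv ℝ G x)) x :=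
      ((hF.differentiable (by simp) (G x)).hasFDerivAt).comp x (hGd x).hasFDerivAt
    have heqfun : (fun p => fderiv ℝ G p ((1 : ℝ), (0 : Fin n → ℝ))) = F ∘ G :=
      funext hB
    have key : fderiv ℝ (fderiv ℝ G) x ((0 : ℝ), v) ((1 : ℝ), (0 : Fin n → ℝ))
        = fderiv ℝ F (G x) (fderiv ℝ G x ((0 : ℝ), v)) := by
      have e1 := happ2.fderiv
      rw [heqfun] at e1
      have e := e1.symm.trans hFG.fderiv
      have e' := congrArg (fun L : (ℝ × (Fin n → ℝ)) →L[ℝ] (Fin n → ℝ) =>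
        L ((0 : ℝ), v)) e
      simpa using e'
    have final : fderiv ℝ (fderiv ℝ G) x ((1 : ℝ), (0 : Fin n → ℝ)) ((0 : ℝ), v)
        = fderiv ℝ F (E t u) (fderiv ℝ (E t) u v) := by
      rw [hA' t u]
      exact (hsymm _ _).trans key
    have hfun : (fun s => fderiv ℝ (E s) u v)
        = fun s => fderiv ℝ G (s, u) ((0 : ℝ), v) := funext fun s => hA' s u
    rw [hfun]
    exact final ▸ hX
  · have hE0 : E 0 = fun w => w := funext hinit
    rw [hE0, fderiv_id']
    rfl
end

section
/- Integral representation of the Lie–Trotter defect: S̃¹(t,v) = ∂_v E_B(t,v) · ∫₀ᵗ ∂_v E_B(−τ, E_B(τ,v)) · [B,A](E_B(τ,v)) dτ, where S̃¹(t,v) = ∂_v E_B(t,v)·A(v) − A(E_B(t,v)). -/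
/-- Integral representation of the Lie–Trotter defect:
`S̃¹(t,v) = ∂_v E_B(t,v) · ∫₀ᵗ ∂_v E_B(−τ, E_B(τ,v)) · [B,A](E_B(τ,v)) dτ`,
where `S̃¹(t,v) = ∂_v E_B(t,v)·A(v) − A(E_B(t,v))` and
`[B,A](u) = B'(u)·A(u) − A'(u)·B(u)`. -/
theorem lie_trotter_defect_integral_representation {n : ℕ}
    (A B : (Fin n → ℝ) → (Fin n → ℝ)) (hA : ContDiff ℝ (⊤ : ℕ∞) A) (hB : ContDiff ℝ (⊤ : ℕ∞) B)
    (EB : ℝ → (Fin n → ℝ) → (Fin n → ℝ))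
    (hEB : ContDiff ℝ (⊤ : ℕ∞) (fun p : ℝ × (Fin n → ℝ) => EB p.1 p.2))
    (hflowB : ∀ t v, HasDerivAt (fun s => EB s v) (B (EB t v)) t)
    (hinitB : ∀ v, EB 0 v = v)
    (hgroupB : ∀ s t v, EB s (EB t v) = EB (s + t) v)
    (t : ℝ) (v : Fin n → ℝ) :
    fderiv ℝ (EB t) v (A v) - A (EB t v)
      = fderiv ℝ (EB t) v
          (∫ τ in (0:ℝ)..t,
            fderiv ℝ (EB (-τ)) (EB τ v)
              (fderiv ℝ B (EB τ v) (A (EB τ v)) - fderiv ℝ A (EB τ v) (B (EB τ v)))) := by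
  have hGd : Differentiable ℝ (fun p : ℝ × (Fin n → ℝ) => EB p.1 p.2) :=
    hEB.differentiable (by simp)
  have hDG : ContDiff ℝ (⊤ : ℕ∞) (fderiv ℝ (fun p : ℝ × (Fin n → ℝ) => EB p.1 p.2)) :=
    hEB.fderiv_right (by simp)
  let G : ℝ × (Fin n → ℝ) → (Fin n → ℝ) := fun p => EB p.1 p.2
  let J : (Fin n → ℝ) →L[ℝ] ℝ × (Fin n → ℝ) :=
    (0 : (Fin n → ℝ) →L[ℝ] ℝ).prod (ContinuousLinearMap.id ℝ (Fin n → ℝ))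
  -- spatial derivative of EB s
  have hEBx : ∀ s x, HasFDerivAt (EB s) ((fderiv ℝ G (s, x)).comp J) x := by
    intro s x
    have hc : HasFDerivAt (fun y : (Fin n → ℝ) => ((s, y) : ℝ × (Fin n → ℝ))) J x :=
      HasFDerivAt.prodMk (hasFDerivAt_const s x) (hasFDerivAt_id x)
    exact (hGd (s, x)).hasFDerivAt.comp x hc
  have hfEB : ∀ s x, fderiv ℝ (EB s) x = (fderiv ℝ G (s, x)).comp J := fun s x =>
    (hEBx s x).fderiv
  have hEBd : ∀ s x, DifferentiableAt ℝ (EB s) x := fun s x => (hEBx s x).differentiableAt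
  -- time derivative identity
  have htime : ∀ p : ℝ × (Fin n → ℝ), fderiv ℝ G p (1, 0) = B (G p) := by
    intro p
    have hc : HasDerivAt (fun s : ℝ => ((s, p.2) : ℝ × (Fin n → ℝ))) ((1:ℝ), (0:Fin n → ℝ)) p.1 :=
      HasDerivAt.prodMk (hasDerivAt_id p.1) (hasDerivAt_const p.1 p.2)
    have h1 : HasDerivAt (fun s => G (s, p.2)) (fderiv ℝ G p (1, 0)) p.1 := by
      have := (hGd p).hasFDerivAt.comp_hasDerivAt p.1 hc
      simpa [Function.comp_def] using this
    exact h1.unique (hflowB p.1 p.2)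
  -- second derivative and its symmetry
  have hF2At : ∀ p, HasFDerivAt (fderiv ℝ G) (fderiv ℝ (fderiv ℝ G) p) p := fun p =>
    (hDG.differentiable (by simp) p).hasFDerivAt
  have hsymm : ∀ p a b, fderiv ℝ (fderiv ℝ G) p a b = fderiv ℝ (fderiv ℝ G) p b a := fun p =>
    second_derivative_symmetric (fun y => (hGd y).hasFDerivAt) (hF2At p)
  -- mixed second derivative identity : f'' p a (1,0) = B'(G p) (DG p a)
  have hmix : ∀ p a, fderiv ℝ (fderiv ℝ G) p a (1, 0) = fderiv ℝ B (G p) (fderiv ℝ G p a) := by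
    intro p a
    have hfun : (fun q => fderiv ℝ G q ((1:ℝ), (0:Fin n → ℝ))) = fun q => B (G q) :=
      funext htime
    have h1 : HasFDerivAt (fun q => fderiv ℝ G q ((1:ℝ), (0:Fin n → ℝ)))
        ((ContinuousLinearMap.apply ℝ (Fin n → ℝ)
          ((1, 0) : ℝ × (Fin n → ℝ))).comp (fderiv ℝ (fderiv ℝ G) p)) p :=
      (ContinuousLinearMap.apply ℝ (Fin n → ℝ)
        ((1, 0) : ℝ × (Fin n → ℝ))).hasFDerivAt.comp p (hF2At p)
    rw [hfun] at h1
    have h2 : HasFDerivAt (fun q => B (G q))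
        ((fderiv ℝ B (G p)).comp (fderiv ℝ G p)) p :=
      ((hB.differentiable (by simp) (G p)).hasFDerivAt).comp p (hGd p).hasFDerivAt
    have := h1.unique h2
    calc fderiv ℝ (fderiv ℝ G) p a (1, 0)
        = fderiv ℝ (fderiv ℝ G) p (1, 0) a := hsymm p a (1, 0)
      _ = ((ContinuousLinearMap.apply ℝ (Fin n → ℝ) ((1, 0) : ℝ × (Fin n → ℝ))).comp
            (fderiv ℝ (fderiv ℝ G) p)) a := by
          simp [ContinuousLinearMap.comp_apply, hsymm p a (1,0)]
      _ = ((fderiv ℝ B (G p)).comp (fderiv ℝ G p)) a := by rw [this]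
      _ = fderiv ℝ B (G p) (fderiv ℝ G p a) := rfl
  -- variational equation for N s := fderiv ℝ (EB s) v
  have hN' : ∀ τ, HasDerivAt (fun s => fderiv ℝ (EB s) v)
      ((fderiv ℝ B (EB τ v)).comp (fderiv ℝ (EB τ) v)) τ := by
    intro τ
    have hc : HasDerivAt (fun s : ℝ => ((s, v) : ℝ × (Fin n → ℝ))) ((1:ℝ), (0:Fin n → ℝ)) τ :=
      HasDerivAt.prodMk (hasDerivAt_id τ) (hasDerivAt_const τ v)
    have h1 : HasDerivAt (fun s => fderiv ℝ G (s, v)) (fderiv ℝ (fderiv ℝ G) (τ, v) (1, 0)) τ := by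
      have := (hF2At (τ, v)).comp_hasDerivAt τ hc
      simpa [Function.comp_def] using this
    let L : (ℝ × (Fin n → ℝ) →L[ℝ] (Fin n → ℝ)) →L[ℝ] ((Fin n → ℝ) →L[ℝ] (Fin n → ℝ)) :=
      (ContinuousLinearMap.compL ℝ (Fin n → ℝ) (ℝ × (Fin n → ℝ)) (Fin n → ℝ)).flip J
    have h2 : HasDerivAt (fun s => (fderiv ℝ G (s, v)).comp J)
        ((fderiv ℝ (fderiv ℝ G) (τ, v) (1, 0)).comp J) τ := by
      have := L.hasFDerivAt.comp_hasDerivAt τ h1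
      simpa [L, Function.comp_def] using this
    have hfn : (fun s => fderiv ℝ (EB s) v) = fun s => (fderiv ℝ G (s, v)).comp J :=
      funext fun s => hfEB s v
    rw [hfn]
    convert h2 using 1
    refine ContinuousLinearMap.ext fun w => ?_
    have hJw : (J w : ℝ × (Fin n → ℝ)) = ((0:ℝ), w) := by simp [J]
    simp only [ContinuousLinearMap.comp_apply, hfEB τ v, hJw]
    rw [hsymm (τ, v) (1, 0) ((0:ℝ), w), hmix (τ, v) ((0:ℝ), w)]
  -- inverses
  have hMN : ∀ τ, (fderiv ℝ (EB (-τ)) (EB τ v)).comp (fderiv ℝ (EB τ) v)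
      = ContinuousLinearMap.id ℝ (Fin n → ℝ) := by
    intro τ
    have hid : (fun x => EB (-τ) (EB τ x)) = fun x => x := by
      funext x; rw [hgroupB]; simp [hinitB]
    have h1 : HasFDerivAt (fun x => EB (-τ) (EB τ x))
        ((fderiv ℝ (EB (-τ)) (EB τ v)).comp (fderiv ℝ (EB τ) v)) v :=
      ((hEBd (-τ) (EB τ v)).hasFDerivAt).comp v (hEBd τ v).hasFDerivAt
    rw [hid] at h1
    exact h1.unique (hasFDerivAt_id v)
  have hNM : ∀ τ, (fderiv ℝ (EB τ) v).comp (fderiv ℝ (EB (-τ)) (EB τ v))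
      = ContinuousLinearMap.id ℝ (Fin n → ℝ) := by
    intro τ
    have hvv : EB (-τ) (EB τ v) = v := by rw [hgroupB]; simp [hinitB]
    have hid : (fun x => EB τ (EB (-τ) x)) = fun x => x := by
      funext x; rw [hgroupB]; simp [hinitB]
    have h1 : HasFDerivAt (fun x => EB τ (EB (-τ) x))
        ((fderiv ℝ (EB τ) v).comp (fderiv ℝ (EB (-τ)) (EB τ v))) (EB τ v) := by
      have := ((hEBd τ (EB (-τ) (EB τ v))).hasFDerivAt).comp (EB τ v)
        (hEBd (-τ) (EB τ v)).hasFDerivAt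
      rwa [hvv] at this
    rw [hid] at h1
    exact h1.unique (hasFDerivAt_id (EB τ v))
  -- units in the CLM algebra
  let u : ℝ → ((Fin n → ℝ) →L[ℝ] (Fin n → ℝ))ˣ := fun τ =>
    { val := fderiv ℝ (EB τ) v
      inv := fderiv ℝ (EB (-τ)) (EB τ v)
      val_inv := by rw [ContinuousLinearMap.mul_def, hNM τ]; rfl
      inv_val := by rw [ContinuousLinearMap.mul_def, hMN τ]; rfl }
  have hRinv : ∀ τ, Ring.inverse (fderiv ℝ (EB τ) v) = fderiv ℝ (EB (-τ)) (EB τ v) := fun τ =>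
    Ring.inverse_unit (u τ)
  have hNMw : ∀ τ x, fderiv ℝ (EB τ) v (fderiv ℝ (EB (-τ)) (EB τ v) x) = x := by
    intro τ x
    have := DFunLike.congr_fun (hNM τ) x
    simpa using this
  -- derivative of the inverse flow differential
  have hM' : ∀ τ, HasDerivAt (fun s => fderiv ℝ (EB (-s)) (EB s v))
      (-(fderiv ℝ (EB (-τ)) (EB τ v)).comp (fderiv ℝ B (EB τ v))) τ := by
    intro τ
    have h1 := (hasFDerivAt_ringInverse (𝕜 := ℝ) (u τ)).comp_hasDerivAt τ (hN' τ)
    simp only [Function.comp_def] at h1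
    have hfn : (fun s => Ring.inverse (fderiv ℝ (EB s) v))
        = fun s => fderiv ℝ (EB (-s)) (EB s v) := funext fun s => hRinv s
    rw [hfn] at h1
    refine h1.congr_deriv ?_
    refine ContinuousLinearMap.ext fun x => ?_
    simp [ContinuousLinearMap.mulLeftRight_apply, ContinuousLinearMap.mul_apply,
      ContinuousLinearMap.comp_apply, ContinuousLinearMap.neg_apply, hNMw τ, u]
  -- derivative of the pulled-back field g
  have ha : ∀ τ, HasDerivAt (fun s => A (EB s v)) (fderiv ℝ A (EB τ v) (B (EB τ v))) τ := by
    intro τ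
    have := (hA.differentiable (by simp) (EB τ v)).hasFDerivAt.comp_hasDerivAt τ (hflowB τ v)
    simpa [Function.comp_def] using this
  have hg : ∀ τ, HasDerivAt (fun s => fderiv ℝ (EB (-s)) (EB s v) (A (EB s v)))
      (-(fderiv ℝ (EB (-τ)) (EB τ v)
        (fderiv ℝ B (EB τ v) (A (EB τ v)) - fderiv ℝ A (EB τ v) (B (EB τ v))))) τ := by
    intro τ
    have h1 := (hM' τ).clm_apply (ha τ)
    refine h1.congr_deriv ?_
    simp only [ContinuousLinearMap.neg_apply, ContinuousLinearMap.comp_apply, map_sub]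
    abel
  -- continuity of the integrand
  have hφc : Continuous (fun τ => EB τ v) :=
    hEB.continuous.comp (continuous_id.prodMk continuous_const)
  have hMc : Continuous (fun τ => fderiv ℝ (EB (-τ)) (EB τ v)) := by
    have hfn : (fun τ => fderiv ℝ (EB (-τ)) (EB τ v))
        = fun τ => (fderiv ℝ G (-τ, EB τ v)).comp J := funext fun τ => hfEB (-τ) (EB τ v)
    rw [hfn]
    have hc1 : Continuous (fun τ => fderiv ℝ G (-τ, EB τ v)) :=
      (hDG.continuous).comp (continuous_neg.prodMk hφc)
    exact hc1.clm_comp continuous_const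
  have hwc : Continuous (fun τ => fderiv ℝ (EB (-τ)) (EB τ v)
      (fderiv ℝ B (EB τ v) (A (EB τ v)) - fderiv ℝ A (EB τ v) (B (EB τ v)))) := by
    apply hMc.clm_apply
    apply Continuous.sub
    · exact ((hB.continuous_fderiv (by simp)).comp hφc).clm_apply (hA.continuous.comp hφc)
    · exact ((hA.continuous_fderiv (by simp)).comp hφc).clm_apply (hB.continuous.comp hφc)
  -- FTC
  have hFTC : (∫ τ in (0:ℝ)..t, -(fderiv ℝ (EB (-τ)) (EB τ v)
        (fderiv ℝ B (EB τ v) (A (EB τ v)) - fderiv ℝ A (EB τ v) (B (EB τ v)))))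
      = fderiv ℝ (EB (-t)) (EB t v) (A (EB t v)) - fderiv ℝ (EB (-0)) (EB 0 v) (A (EB 0 v)) :=
    intervalIntegral.integral_eq_sub_of_hasDerivAt (fun τ _ => hg τ)
      ((hwc.neg).intervalIntegrable 0 t)
  have hg0 : fderiv ℝ (EB (-0)) (EB 0 v) (A (EB 0 v)) = A v := by
    have hEB0 : EB 0 = fun x => x := funext hinitB
    rw [neg_zero, hinitB v, hEB0]
    simp [fderiv_id']
  have hint : (∫ τ in (0:ℝ)..t, fderiv ℝ (EB (-τ)) (EB τ v)
        (fderiv ℝ B (EB τ v) (A (EB τ v)) - fderiv ℝ A (EB τ v) (B (EB τ v))))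
      = A v - fderiv ℝ (EB (-t)) (EB t v) (A (EB t v)) := by
    rw [intervalIntegral.integral_neg, hg0] at hFTC
    have := congrArg Neg.neg hFTC
    rw [neg_neg, neg_sub] at this
    exact this
  rw [hint, map_sub, hNMw t (A (EB t v))]
end

section
/- Local error integral representation: for the Lie–Trotter splitting S(t,u) = E_B(t,E_A(t,u)) and exact flow E_H of H = A+B, the local error satisfies L(t,u) := S(t,u) − E_H(t,u) = ∫₀ᵗ ∂_u E_H(t−τ, S(τ,u)) · D(τ,u) dτ, where D(τ,u) = ∂_τ S(τ,u) − H(S(τ,u)). -/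
/-- Local error integral representation for the Lie–Trotter splitting
`S(t,u) = E_B(t, E_A(t,u))` with exact flow `E_H` of `H = A + B`:
`S(t,u) − E_H(t,u) = ∫₀ᵗ ∂_u E_H(t−τ, S(τ,u)) · D(τ,u) dτ`, where
`D(τ,u) = ∂_τ S(τ,u) − H(S(τ,u))`. -/
theorem lie_trotter_local_error_integral_representation {n : ℕ}
    (A B : (Fin n → ℝ) → (Fin n → ℝ)) (hA : ContDiff ℝ (⊤ : ℕ∞) A) (hB : ContDiff ℝ (⊤ : ℕ∞) B)
    (EA EB EH : ℝ → (Fin n → ℝ) → (Fin n → ℝ))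
    (hEA : ContDiff ℝ (⊤ : ℕ∞) (fun p : ℝ × (Fin n → ℝ) => EA p.1 p.2))
    (hEB : ContDiff ℝ (⊤ : ℕ∞) (fun p : ℝ × (Fin n → ℝ) => EB p.1 p.2))
    (hEH : ContDiff ℝ (⊤ : ℕ∞) (fun p : ℝ × (Fin n → ℝ) => EH p.1 p.2))
    (hflowA : ∀ t u, HasDerivAt (fun s => EA s u) (A (EA t u)) t)
    (hflowB : ∀ t v, HasDerivAt (fun s => EB s v) (B (EB t v)) t)
    (hflowH : ∀ t u, HasDerivAt (fun s => EH s u) (A (EH t u) + B (EH t u)) t)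
    (hinitA : ∀ u, EA 0 u = u) (hinitB : ∀ v, EB 0 v = v) (hinitH : ∀ u, EH 0 u = u)
    (hgroupH : ∀ s t u, EH s (EH t u) = EH (s + t) u)
    (S D : ℝ → (Fin n → ℝ) → (Fin n → ℝ))
    (hS : ∀ t u, S t u = EB t (EA t u))
    (hD : ∀ t u, D t u = deriv (fun s => S s u) t - (A (S t u) + B (S t u)))
    (t : ℝ) (u : Fin n → ℝ) :
    S t u - EH t u
      = ∫ τ in (0:ℝ)..t, fderiv ℝ (EH (t - τ)) (S τ u) (D τ u) := by
  classical
  have hFd : Differentiable ℝ (fun p : ℝ × (Fin n → ℝ) => EH p.1 p.2) :=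
    hEH.differentiable (by simp)
  -- smoothness of S
  have hScd : ContDiff ℝ (⊤ : ℕ∞) (fun p : ℝ × (Fin n → ℝ) => S p.1 p.2) := by
    have heq : (fun p : ℝ × (Fin n → ℝ) => S p.1 p.2)
        = fun p : ℝ × (Fin n → ℝ) => EB p.1 (EA p.1 p.2) := by
      funext p; exact hS p.1 p.2
    rw [heq]
    exact hEB.comp (contDiff_fst.prodMk hEA)
  have hScurve : ContDiff ℝ (⊤ : ℕ∞) (fun s => S s u) :=
    hScd.comp (contDiff_id.prodMk contDiff_const)
  have hSdiff : ∀ τ : ℝ, HasDerivAt (fun s => S s u) (deriv (fun s => S s u) τ) τ :=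
    fun τ => ((hScurve.differentiable (by simp)) τ).hasDerivAt
  -- key pullback identity: ∂_u EH(s,v) (H v) = H (EH s v)
  have key : ∀ (s : ℝ) (v : Fin n → ℝ),
      fderiv ℝ (EH s) v (A v + B v) = A (EH s v) + B (EH s v) := by
    intro s v
    have hEHs : Differentiable ℝ (EH s) :=
      (hEH.comp (contDiff_const.prodMk contDiff_id)).differentiable (by simp)
    have h1 : HasDerivAt (fun ε => EH s (EH ε v))
        (fderiv ℝ (EH s) (EH 0 v) (A (EH 0 v) + B (EH 0 v))) 0 :=
      (hEHs (EH 0 v)).hasFDerivAt.comp_hasDerivAt 0 (hflowH 0 v)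
    have heq : (fun ε => EH s (EH ε v)) = fun ε => EH (s + ε) v := by
      funext ε; exact hgroupH s ε v
    rw [heq] at h1
    have h2 : HasDerivAt (fun ε : ℝ => EH (s + ε) v)
        (A (EH (s + 0) v) + B (EH (s + 0) v)) 0 := by
      have hc : HasDerivAt (fun ε : ℝ => s + ε) 1 0 := (hasDerivAt_id 0).const_add s
      have := (hflowH (s + 0) v).scomp 0 hc
      simpa [Function.comp_def] using this
    have huniq := h1.unique h2
    simpa [hinitH v] using huniq
  -- partial derivatives of F := uncurried EH
  have partial1 : ∀ (a : ℝ) (b : Fin n → ℝ),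
      fderiv ℝ (fun p : ℝ × (Fin n → ℝ) => EH p.1 p.2) (a, b)
        ((1 : ℝ), (0 : Fin n → ℝ)) = A (EH a b) + B (EH a b) := by
    intro a b
    have hp : HasDerivAt (fun s : ℝ => ((s, b) : ℝ × (Fin n → ℝ)))
        ((1 : ℝ), (0 : Fin n → ℝ)) a :=
      (hasDerivAt_id a).prodMk (hasDerivAt_const a b)
    have h1 : HasDerivAt (fun s : ℝ => EH s b)
        (fderiv ℝ (fun p : ℝ × (Fin n → ℝ) => EH p.1 p.2) (a, b)
          ((1 : ℝ), (0 : Fin n → ℝ))) a :=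
      by have := (hFd (a, b)).hasFDerivAt.comp_hasDerivAt a hp; exact this
    exact h1.unique (hflowH a b)
  have partial2 : ∀ (a : ℝ) (b : Fin n → ℝ),
      fderiv ℝ (EH a) b
        = (fderiv ℝ (fun p : ℝ × (Fin n → ℝ) => EH p.1 p.2) (a, b)).comp
            (ContinuousLinearMap.inr ℝ ℝ (Fin n → ℝ)) := by
    intro a b
    have hp : HasFDerivAt (fun y : Fin n → ℝ => ((a, y) : ℝ × (Fin n → ℝ)))
        (ContinuousLinearMap.inr ℝ ℝ (Fin n → ℝ)) b :=
      (hasFDerivAt_const a b).prodMk (hasFDerivAt_id b)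
    have h1 : HasFDerivAt (fun y : Fin n → ℝ => EH a y)
        ((fderiv ℝ (fun p : ℝ × (Fin n → ℝ) => EH p.1 p.2) (a, b)).comp
          (ContinuousLinearMap.inr ℝ ℝ (Fin n → ℝ))) b :=
      (hFd (a, b)).hasFDerivAt.comp b hp
    exact h1.fderiv
  -- derivative of g τ = EH (t - τ) (S τ u)
  have hg : ∀ τ : ℝ, HasDerivAt (fun τ => EH (t - τ) (S τ u))
      (fderiv ℝ (EH (t - τ)) (S τ u) (D τ u)) τ := by
    intro τ
    have hp : HasDerivAt (fun τ : ℝ => ((t - τ, S τ u) : ℝ × (Fin n → ℝ)))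
        (((-1 : ℝ), deriv (fun s => S s u) τ)) τ := by
      have h1 : HasDerivAt (fun τ : ℝ => t - τ) (-1) τ := by
        simpa using ((hasDerivAt_id τ).const_sub t)
      exact h1.prodMk (hSdiff τ)
    have h1 : HasDerivAt (fun τ => EH (t - τ) (S τ u))
        (fderiv ℝ (fun p : ℝ × (Fin n → ℝ) => EH p.1 p.2) (t - τ, S τ u)
          ((-1 : ℝ), deriv (fun s => S s u) τ)) τ :=
      by have := (hFd (t - τ, S τ u)).hasFDerivAt.comp_hasDerivAt τ hp; exact this
    have hval : fderiv ℝ (fun p : ℝ × (Fin n → ℝ) => EH p.1 p.2) (t - τ, S τ u)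
          ((-1 : ℝ), deriv (fun s => S s u) τ)
        = fderiv ℝ (EH (t - τ)) (S τ u) (D τ u) := by
      have hsplit : (((-1 : ℝ), deriv (fun s => S s u) τ) : ℝ × (Fin n → ℝ))
          = (-1 : ℝ) • (((1 : ℝ), (0 : Fin n → ℝ)) : ℝ × (Fin n → ℝ))
            + (((0 : ℝ), deriv (fun s => S s u) τ) : ℝ × (Fin n → ℝ)) := by
        simp [Prod.ext_iff]
      rw [hsplit, map_add, map_smul, partial1 (t - τ) (S τ u)]
      have h2 : (fderiv ℝ (fun p : ℝ × (Fin n → ℝ) => EH p.1 p.2) (t - τ, S τ u))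
            (((0 : ℝ), deriv (fun s => S s u) τ) : ℝ × (Fin n → ℝ))
          = fderiv ℝ (EH (t - τ)) (S τ u) (deriv (fun s => S s u) τ) := by
        rw [partial2 (t - τ) (S τ u)]; rfl
      rw [h2, hD τ u, map_sub, key (t - τ) (S τ u)]
      module
    rwa [hval] at h1
  -- continuity of the integrand
  have hScont : Continuous (fun τ : ℝ => S τ u) := hScurve.continuous
  have hcont1 : Continuous (fun τ : ℝ => fderiv ℝ (EH (t - τ)) (S τ u)) := by
    have hf : ContDiff ℝ (⊤ : ℕ∞) (fun p : ℝ × (Fin n → ℝ) => EH (t - p.1) p.2) :=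
      hEH.comp ((contDiff_const.sub contDiff_fst).prodMk contDiff_snd)
    have hg0 : ContDiff ℝ 0 (fun τ : ℝ => S τ u) := hScurve.of_le (by simp)
    have := ContDiff.fderiv (𝕜 := ℝ) (f := fun (τ : ℝ) (y : Fin n → ℝ) => EH (t - τ) y)
      (g := fun τ : ℝ => S τ u) hf hg0 (by simp)
    exact this.continuous
  have hcont2 : Continuous (fun τ : ℝ => D τ u) := by
    have heq : (fun τ : ℝ => D τ u)
        = fun τ => deriv (fun s => S s u) τ - (A (S τ u) + B (S τ u)) := by
      funext τ; exact hD τ u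
    rw [heq]
    exact (hScurve.continuous_deriv (by simp)).sub
      ((hA.continuous.comp hScont).add (hB.continuous.comp hScont))
  have hcont : Continuous (fun τ : ℝ => fderiv ℝ (EH (t - τ)) (S τ u) (D τ u)) :=
    hcont1.clm_apply hcont2
  have hFTC := intervalIntegral.integral_eq_sub_of_hasDerivAt
    (f := fun τ => EH (t - τ) (S τ u)) (fun τ _ => hg τ) (hcont.intervalIntegrable 0 t)
  rw [hFTC]
  have hS0 : S 0 u = u := by rw [hS, hinitA, hinitB]
  simp [hS0, hinitH]
end

section
/- The Strang splitting defect vanishes to first order at t = 0: for S(t,u) = E_B(t/2, E_A(t, E_B(t/2,u))) and H = A + B, the defect D(t,u) = ∂_t S(t,u) − H(S(t,u)) satisfies D(0,u) = 0 and ∂_t D(t,u)|_{t=0} = 0. -/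
open ContinuousLinearMap

lemma flow_aux {E : Type*} [NormedAddCommGroup E] [NormedSpace ℝ E]
    (A : E → E) (hA : ContDiff ℝ (⊤ : ℕ∞) A)
    (FA : ℝ × E → E) (hFA : ContDiff ℝ (⊤ : ℕ∞) FA)
    (hflow : ∀ (t : ℝ) (x : E), HasDerivAt (fun s => FA (s, x)) (A (FA (t, x))) t)
    (hinit : ∀ x : E, FA (0, x) = x)
    (u : E) (γ dγ : ℝ → ℝ × E) (γ'' : ℝ × E)
    (hγ0 : γ 0 = (0, u))
    (hγ : ∀ t, HasDerivAt γ (dγ t) t)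
    (hdγ : HasDerivAt dγ γ'' 0) :
    ∃ df : ℝ → E,
      (∀ t, HasDerivAt (fun s => FA (γ s)) (df t) t) ∧
      df 0 = (dγ 0).1 • A u + (dγ 0).2 ∧
      HasDerivAt df
        (((dγ 0).1 * (dγ 0).1) • fderiv ℝ A u (A u)
          + (2 * (dγ 0).1) • fderiv ℝ A u (dγ 0).2
          + (γ''.1 • A u + γ''.2)) 0 := by
  have hFAd : Differentiable ℝ FA := hFA.differentiable (by simp)
  set M : ℝ × E → (ℝ × E →L[ℝ] E) := fderiv ℝ FA with hMdef
  have hMc : ContDiff ℝ (⊤ : ℕ∞) M := hFA.fderiv_right (by simp)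
  have hMd : Differentiable ℝ M := hMc.differentiable (by simp)
  -- Step A : time partial derivative of the flow
  have stepA : ∀ p : ℝ × E, M p ((1 : ℝ), (0 : E)) = A (FA p) := by
    intro p
    have hline : HasDerivAt (fun t : ℝ => (t, p.2)) ((1 : ℝ), (0 : E)) p.1 :=
      (hasDerivAt_id p.1).prodMk (hasDerivAt_const p.1 p.2)
    have h1 : HasDerivAt (fun t : ℝ => FA (t, p.2)) (M p ((1 : ℝ), (0 : E))) p.1 :=
      (hFAd p).hasFDerivAt.comp_hasDerivAt p.1 hline
    exact h1.unique (hflow p.1 p.2)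
  -- Step B : space derivative at time zero is the identity
  have stepB : ∀ x : E, (M (0, x)).comp (inr ℝ ℝ E) = ContinuousLinearMap.id ℝ E := by
    intro x
    have h2 : HasFDerivAt (fun y : E => FA (0, y)) ((M (0, x)).comp (inr ℝ ℝ E)) x :=
      (hFAd (0, x)).hasFDerivAt.comp x (inr ℝ ℝ E).hasFDerivAt
    have h3 : (fun y : E => FA (0, y)) = fun y => y := funext fun y => hinit y
    rw [h3] at h2
    exact h2.unique (hasFDerivAt_id x)
  have hM0 : ∀ w : ℝ × E, M (0, u) w = w.1 • A u + w.2 := by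
    rintro ⟨s, v⟩
    have hsplit : ((s : ℝ), v) = s • ((1 : ℝ), (0 : E)) + ((0 : ℝ), v) := by
      simp [Prod.ext_iff]
    have h4 : M (0, u) ((0 : ℝ), v) = v := by
      have h5 := congrFun (congrArg DFunLike.coe (stepB u)) v
      simpa using h5
    show M (0, u) (s, v) = s • A u + v
    conv_lhs => rw [hsplit]
    rw [map_add, map_smul, stepA, h4, hinit]
  -- the second derivative
  set Q : ℝ × E →L[ℝ] (ℝ × E →L[ℝ] E) := fderiv ℝ M (0, u) with hQdef
  have hsymm : ∀ w₁ w₂ : ℝ × E, Q w₁ w₂ = Q w₂ w₁ := by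
    intro w₁ w₂
    exact (hFA.contDiffAt (x := ((0 : ℝ), u))).isSymmSndFDerivAt (by rw [minSmoothness_of_isRCLikeNormedField]; exact WithTop.coe_le_coe.mpr le_top) w₁ w₂
  have hQa : ∀ w : ℝ × E, Q w ((1 : ℝ), (0 : E)) = fderiv ℝ A u (M (0, u) w) := by
    intro w
    have hΦ : HasFDerivAt (fun p : ℝ × E => M p ((1 : ℝ), (0 : E)))
        ((ContinuousLinearMap.apply ℝ E ((1 : ℝ), (0 : E))).comp Q) (0, u) :=
      (ContinuousLinearMap.apply ℝ E ((1 : ℝ), (0 : E))).hasFDerivAt.comp (0, u)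
        (hMd (0, u)).hasFDerivAt
    have hrw : (fun p : ℝ × E => M p ((1 : ℝ), (0 : E))) = fun p => A (FA p) :=
      funext stepA
    rw [hrw] at hΦ
    have hA2 : HasFDerivAt (fun p : ℝ × E => A (FA p))
        ((fderiv ℝ A u).comp (M (0, u))) (0, u) := by
      have h6 : HasFDerivAt A (fderiv ℝ A u) (FA (0, u)) := by
        rw [hinit u]
        exact (hA.differentiable (by simp) u).hasFDerivAt
      exact h6.comp (0, u) (hFAd (0, u)).hasFDerivAt
    have h7 := hΦ.unique hA2
    have h8 := congrFun (congrArg DFunLike.coe h7) w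
    simpa using h8
  have hQb : ∀ v v' : E, Q ((0 : ℝ), v) ((0 : ℝ), v') = 0 := by
    intro v v'
    set Φ : (ℝ × E →L[ℝ] E) →L[ℝ] (E →L[ℝ] E) :=
      (compL ℝ E (ℝ × E) E).flip (inr ℝ ℝ E) with hΦdef
    have h1 : HasFDerivAt (fun x : E => M ((0 : ℝ), x)) (Q.comp (inr ℝ ℝ E)) u :=
      (hMd (0, u)).hasFDerivAt.comp u (inr ℝ ℝ E).hasFDerivAt
    have hN : HasFDerivAt (fun x : E => Φ (M ((0 : ℝ), x))) (Φ.comp (Q.comp (inr ℝ ℝ E))) u :=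
      Φ.hasFDerivAt.comp u h1
    have hconst : (fun x : E => Φ (M ((0 : ℝ), x))) = fun _ => ContinuousLinearMap.id ℝ E := by
      funext x
      exact stepB x
    rw [hconst] at hN
    have h9 := hN.unique (hasFDerivAt_const _ _)
    have h10 := congrArg (fun (T : E →L[ℝ] (E →L[ℝ] E)) => T v v') h9
    simpa [hΦdef] using h10
  have hQ : ∀ w w' : ℝ × E,
      Q w w' = (w.1 * w'.1) • fderiv ℝ A u (A u) + w.1 • fderiv ℝ A u w'.2
        + w'.1 • fderiv ℝ A u w.2 := by
    rintro ⟨s, v⟩ ⟨s', v'⟩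
    have e1 : ((s : ℝ), v) = s • ((1 : ℝ), (0 : E)) + ((0 : ℝ), v) := by
      simp [Prod.ext_iff]
    have e2 : ((s' : ℝ), v') = s' • ((1 : ℝ), (0 : E)) + ((0 : ℝ), v') := by
      simp [Prod.ext_iff]
    have hQ10 : ∀ w : ℝ × E, Q ((1 : ℝ), (0 : E)) w = fderiv ℝ A u (M (0, u) w) :=
      fun w => (hsymm _ _).trans (hQa w)
    have step1 : Q ((s : ℝ), v) ((s' : ℝ), v')
        = s • Q ((1 : ℝ), (0 : E)) ((s' : ℝ), v') + Q ((0 : ℝ), v) ((s' : ℝ), v') := by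
      rw [e1, map_add, map_smul]
      simp
    have step2 : Q ((1 : ℝ), (0 : E)) ((s' : ℝ), v')
        = s' • fderiv ℝ A u (A u) + fderiv ℝ A u v' := by
      rw [hQ10, hM0, map_add, map_smul]
    have step3 : Q ((0 : ℝ), v) ((s' : ℝ), v') = s' • fderiv ℝ A u v := by
      have h11 : Q ((0 : ℝ), v) ((1 : ℝ), (0 : E)) = fderiv ℝ A u v := by
        rw [hQa, hM0]
        simp
      rw [e2, map_add, map_smul, hQb, add_zero, h11]
    rw [step1, step2, step3]
    simp only
    module
  refine ⟨fun t => M (γ t) (dγ t),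
    fun t => (hFAd (γ t)).hasFDerivAt.comp_hasDerivAt t (hγ t), ?_, ?_⟩
  · show M (γ 0) (dγ 0) = _
    rw [hγ0, hM0]
  · have hc : HasDerivAt (fun t => M (γ t)) (Q (dγ 0)) 0 := by
      have h12 := (hMd (γ 0)).hasFDerivAt.comp_hasDerivAt 0 (hγ 0)
      rw [hγ0] at h12
      exact h12
    have hder := hc.clm_apply hdγ
    have h13 : Q (dγ 0) (dγ 0) + M (γ 0) γ''
        = ((dγ 0).1 * (dγ 0).1) • fderiv ℝ A u (A u)
          + (2 * (dγ 0).1) • fderiv ℝ A u (dγ 0).2 + (γ''.1 • A u + γ''.2) := by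
      rw [hγ0, hM0, hQ]
      module
    rw [h13] at hder
    exact hder
/-- The Strang splitting defect vanishes to first order at `t = 0`: with
`S(t,u) = E_B(t/2, E_A(t, E_B(t/2,u)))` and `H = A + B`, the defect
`D(t,u) = ∂_t S(t,u) − H(S(t,u))` satisfies `D(0,u) = 0` and
`∂_t D(t,u)|_{t=0} = 0`. -/
theorem strang_defect_first_order_at_zero {n : ℕ}
    (A B : (Fin n → ℝ) → (Fin n → ℝ)) (hA : ContDiff ℝ (⊤ : ℕ∞) A) (hB : ContDiff ℝ (⊤ : ℕ∞) B)
    (EA EB : ℝ → (Fin n → ℝ) → (Fin n → ℝ))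
    (hEA : ContDiff ℝ (⊤ : ℕ∞) (fun p : ℝ × (Fin n → ℝ) => EA p.1 p.2))
    (hEB : ContDiff ℝ (⊤ : ℕ∞) (fun p : ℝ × (Fin n → ℝ) => EB p.1 p.2))
    (hflowA : ∀ t u, HasDerivAt (fun s => EA s u) (A (EA t u)) t)
    (hflowB : ∀ t v, HasDerivAt (fun s => EB s v) (B (EB t v)) t)
    (hinitA : ∀ u, EA 0 u = u) (hinitB : ∀ v, EB 0 v = v)
    (S D : ℝ → (Fin n → ℝ) → (Fin n → ℝ))
    (hS : ∀ t u, S t u = EB (t / 2) (EA t (EB (t / 2) u)))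
    (hD : ∀ t u, D t u = deriv (fun s => S s u) t - (A (S t u) + B (S t u)))
    (u : Fin n → ℝ) :
    D 0 u = 0 ∧ deriv (fun t => D t u) 0 = 0 := by
  -- the inner curve `g t = EB (t/2) u`
  have hg : ∀ t : ℝ, HasDerivAt (fun s : ℝ => EB (s / 2) u)
      ((2⁻¹ : ℝ) • B (EB (t / 2) u)) t := by
    intro t
    have h1 : HasDerivAt (fun s : ℝ => s / 2) (2⁻¹ : ℝ) t := by
      simpa [one_div] using (hasDerivAt_id t).div_const (2 : ℝ)
    exact (hflowB (t / 2) u).scomp t h1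
  have hg0 : EB (0 / 2 : ℝ) u = u := by rw [zero_div, hinitB]
  have hdg : HasDerivAt (fun t : ℝ => (2⁻¹ : ℝ) • B (EB (t / 2) u))
      ((4⁻¹ : ℝ) • fderiv ℝ B u (B u)) 0 := by
    have hcomp : HasDerivAt (fun t : ℝ => B (EB (t / 2) u))
        (fderiv ℝ B u ((2⁻¹ : ℝ) • B u)) 0 := by
      have h := ((hB.differentiable (by simp) (EB (0 / 2 : ℝ) u)).hasFDerivAt).comp_hasDerivAt
        0 (hg 0)
      rwa [hg0] at h
    have h2 := hcomp.const_smul (2⁻¹ : ℝ)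
    have h3 : (2⁻¹ : ℝ) • fderiv ℝ B u ((2⁻¹ : ℝ) • B u)
        = (4⁻¹ : ℝ) • fderiv ℝ B u (B u) := by
      rw [map_smul, smul_smul]
      norm_num
    rwa [h3] at h2
  -- apply the flow lemma to `A` along `t ↦ (t, g t)`
  obtain ⟨f', hf'deriv, hf'0, hf''⟩ := flow_aux A hA
    (fun p : ℝ × (Fin n → ℝ) => EA p.1 p.2) hEA
    (fun t x => hflowA t x) (fun x => hinitA x) u
    (fun t => (t, EB (t / 2) u))
    (fun t => ((1 : ℝ), (2⁻¹ : ℝ) • B (EB (t / 2) u)))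
    ((0 : ℝ), (4⁻¹ : ℝ) • fderiv ℝ B u (B u))
    (by simp [hinitB])
    (fun t => (hasDerivAt_id t).prodMk (hg t))
    ((hasDerivAt_const 0 (1 : ℝ)).prodMk hdg)
  have hf'0' : f' 0 = A u + (2⁻¹ : ℝ) • B u := by
    rw [hf'0]
    simp [hinitB]
  have hf''' : HasDerivAt f'
      (fderiv ℝ A u (A u) + fderiv ℝ A u (B u) + (4⁻¹ : ℝ) • fderiv ℝ B u (B u)) 0 := by
    have heq : ((1 : ℝ) * (1 : ℝ)) • fderiv ℝ A u (A u)
          + (2 * (1 : ℝ)) • fderiv ℝ A u ((2⁻¹ : ℝ) • B (EB (0 / 2 : ℝ) u))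
          + ((0 : ℝ) • A u + (4⁻¹ : ℝ) • fderiv ℝ B u (B u))
        = fderiv ℝ A u (A u) + fderiv ℝ A u (B u) + (4⁻¹ : ℝ) • fderiv ℝ B u (B u) := by
      rw [hg0, map_smul]
      module
    rw [heq] at hf''
    exact hf''
  -- apply the flow lemma to `B` along `t ↦ (t/2, f t)`
  obtain ⟨dS, hdSderiv, hdS0, hdS'⟩ := flow_aux B hB
    (fun p : ℝ × (Fin n → ℝ) => EB p.1 p.2) hEB
    (fun t x => hflowB t x) (fun x => hinitB x) u
    (fun t => (t / 2, EA t (EB (t / 2) u)))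
    (fun t => ((2⁻¹ : ℝ), f' t))
    ((0 : ℝ), fderiv ℝ A u (A u) + fderiv ℝ A u (B u) + (4⁻¹ : ℝ) • fderiv ℝ B u (B u))
    (by simp [hinitA, hinitB])
    (fun t => (by
      have h1 : HasDerivAt (fun s : ℝ => s / 2) (2⁻¹ : ℝ) t := by
        simpa [one_div] using (hasDerivAt_id t).div_const (2 : ℝ)
      exact h1.prodMk (hf'deriv t)))
    ((hasDerivAt_const 0 ((2⁻¹ : ℝ))).prodMk hf''')
  have hdS0' : dS 0 = A u + B u := by
    rw [hdS0]
    show (2⁻¹ : ℝ) • B u + f' 0 = A u + B u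
    rw [hf'0']
    module
  have hdS'' : HasDerivAt dS
      (fderiv ℝ A u (A u) + fderiv ℝ A u (B u)
        + fderiv ℝ B u (A u) + fderiv ℝ B u (B u)) 0 := by
    have heq : ((2⁻¹ : ℝ) * (2⁻¹ : ℝ)) • fderiv ℝ B u (B u)
          + (2 * (2⁻¹ : ℝ)) • fderiv ℝ B u (f' 0)
          + ((0 : ℝ) • B u
            + (fderiv ℝ A u (A u) + fderiv ℝ A u (B u) + (4⁻¹ : ℝ) • fderiv ℝ B u (B u)))
        = fderiv ℝ A u (A u) + fderiv ℝ A u (B u)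
          + fderiv ℝ B u (A u) + fderiv ℝ B u (B u) := by
      rw [hf'0', map_add, map_smul]
      module
    rw [heq] at hdS'
    exact hdS'
  -- identify `deriv (fun s => S s u)`
  have hSfun : (fun s : ℝ => S s u) = fun s => EB (s / 2) (EA s (EB (s / 2) u)) :=
    funext fun s => hS s u
  have hdScurve : ∀ t : ℝ, HasDerivAt (fun s : ℝ => S s u) (dS t) t := by
    intro t
    rw [hSfun]
    exact hdSderiv t
  have hderivS : ∀ t : ℝ, deriv (fun s : ℝ => S s u) t = dS t :=
    fun t => (hdScurve t).deriv
  have hS0 : S 0 u = u := by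
    rw [hS 0 u, zero_div, hinitB, hinitA, hinitB]
  constructor
  · rw [hD 0 u, hderivS 0, hdS0', hS0]
    simp
  · have hScurve0 : HasDerivAt (fun t : ℝ => S t u) (A u + B u) 0 := by
      rw [← hdS0']
      exact hdScurve 0
    have hAcomp : HasDerivAt (fun t : ℝ => A (S t u)) (fderiv ℝ A u (A u + B u)) 0 := by
      have h := ((hA.differentiable (by simp) (S 0 u)).hasFDerivAt).comp_hasDerivAt 0 hScurve0
      rwa [hS0] at h
    have hBcomp : HasDerivAt (fun t : ℝ => B (S t u)) (fderiv ℝ B u (A u + B u)) 0 := by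
      have h := ((hB.differentiable (by simp) (S 0 u)).hasFDerivAt).comp_hasDerivAt 0 hScurve0
      rwa [hS0] at h
    have hDfun : (fun t : ℝ => D t u) = fun t => dS t - (A (S t u) + B (S t u)) := by
      funext t
      rw [hD t u, hderivS t]
    have hDderiv : HasDerivAt (fun t : ℝ => D t u)
        ((fderiv ℝ A u (A u) + fderiv ℝ A u (B u)
          + fderiv ℝ B u (A u) + fderiv ℝ B u (B u))
          - (fderiv ℝ A u (A u + B u) + fderiv ℝ B u (A u + B u))) 0 := by
      rw [hDfun]
      exact hdS''.sub (hAcomp.add hBcomp)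
    rw [hDderiv.deriv, map_add, map_add]
    abel
end
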